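/- Let K be ℝ or ℂ, d ≥ 1, and let 𝒜 be an irreducible compact set of d×d matrices over K. Then a real number ρ ≥ 0 equals the joint spectral radius ρ(𝒜) if and only if there exists a norm ‖·‖_b on K^d such that ρ·‖x‖_b = max_{A∈𝒜} ‖Ax‖_b for all x ∈ K^d. -/

import Mathlib

open Filter Set

namespace JSRPaper

section Defs

variable {d : ℕ} {K : Type*} [RCLike K]

/-- `N` is a norm on `Fin d → K` (`K` is `ℝ` or `ℂ`). -/
def IsNorm (N : (Fin d → K) → ℝ) : Prop :=
  (∀ x, 0 ≤ N x) ∧ (∀ x, N x = 0 ↔ x = 0) ∧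
    (∀ (c : K) (x : Fin d → K), N (c • x) = ‖c‖ * N x) ∧
    (∀ x y, N (x + y) ≤ N x + N y)

/-- Operator norm of a matrix induced by the norm `N` on `Fin d → K`. -/
noncomputable def opNorm (N : (Fin d → K) → ℝ) (A : Matrix (Fin d) (Fin d) K) : ℝ :=
  sSup {r : ℝ | ∃ x : Fin d → K, N x = 1 ∧ r = N (A.mulVec x)}

/-- `‖𝒜‖ = sup_{A ∈ 𝒜} ‖A‖`. -/
noncomputable def setNorm (N : (Fin d → K) → ℝ) (𝒜 : Set (Matrix (Fin d) (Fin d) K)) : ℝ :=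
  sSup (opNorm N '' 𝒜)

/-- `𝒜^n`: the set of all products of `n` matrices from `𝒜`, with `𝒜^0 = {I}`. -/
def prodSet (𝒜 : Set (Matrix (Fin d) (Fin d) K)) : ℕ → Set (Matrix (Fin d) (Fin d) K)
  | 0 => {1}
  | n + 1 => {M | ∃ A ∈ 𝒜, ∃ P ∈ prodSet 𝒜 n, M = A * P}

/-- The joint spectral radius `ρ(𝒜) = limsup_{n → ∞} ‖𝒜^n‖^{1/n}`. -/
noncomputable def jsr (N : (Fin d → K) → ℝ) (𝒜 : Set (Matrix (Fin d) (Fin d) K)) : ℝ :=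
  Filter.limsup (fun n : ℕ => setNorm N (prodSet 𝒜 n) ^ ((n : ℝ)⁻¹)) Filter.atTop

/-- `𝒜` is irreducible: the matrices of `𝒜` have no common invariant subspace
other than `{0}` and `K^d`. -/
def IsIrred (𝒜 : Set (Matrix (Fin d) (Fin d) K)) : Prop :=
  ∀ W : Submodule K (Fin d → K), (∀ A ∈ 𝒜, ∀ x ∈ W, A.mulVec x ∈ W) → W = ⊥ ∨ W = ⊤

/-- `ℬ` is a bounded set of matrices (w.r.t. the operator norm induced by `N`). -/
def IsBdd (N : (Fin d → K) → ℝ) (ℬ : Set (Matrix (Fin d) (Fin d) K)) : Prop :=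
  ∃ C : ℝ, ∀ B ∈ ℬ, opNorm N B ≤ C

/-- The `p`-measure of irreducibility `χ_p(𝒜)`:
`inf_{‖x‖=1} sup { t : ball(0,t) ⊆ conv(𝒜_p(x) ∪ 𝒜_p(-x)) }`, where
`𝒜_p = ⋃_{k ≤ p} 𝒜^k`. -/
noncomputable def chi (N : (Fin d → K) → ℝ) (𝒜 : Set (Matrix (Fin d) (Fin d) K)) (p : ℕ) : ℝ :=
  sInf {s : ℝ | ∃ x : Fin d → K, N x = 1 ∧
    s = sSup {t : ℝ | {y : Fin d → K | N y ≤ t} ⊆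
      convexHull ℝ
        (((fun A : Matrix (Fin d) (Fin d) K => A.mulVec x) ''
            ⋃ k ∈ Finset.range (p + 1), prodSet 𝒜 k) ∪
          ((fun A : Matrix (Fin d) (Fin d) K => A.mulVec (-x)) ''
            ⋃ k ∈ Finset.range (p + 1), prodSet 𝒜 k))}}

/-- `ν_p(𝒜) = max{1, ‖𝒜‖^p} / χ_p(𝒜)`. -/
noncomputable def nu (N : (Fin d → K) → ℝ) (𝒜 : Set (Matrix (Fin d) (Fin d) K)) (p : ℕ) : ℝ :=
  max 1 (setNorm N 𝒜 ^ p) / chi N 𝒜 p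

/-- The Hausdorff distance between two matrix sets, w.r.t. the operator norm induced by `N`. -/
noncomputable def hdist (N : (Fin d → K) → ℝ) (𝒜 ℬ : Set (Matrix (Fin d) (Fin d) K)) : ℝ :=
  max (sSup ((fun A => sInf ((fun B => opNorm N (A - B)) '' ℬ)) '' 𝒜))
      (sSup ((fun B => sInf ((fun A => opNorm N (A - B)) '' 𝒜)) '' ℬ))

/-- `Nb` is a Barabanov norm for `𝒜`: it is a norm on `K^d` and
`ρ(𝒜)·‖x‖_b = max_{A ∈ 𝒜} ‖A x‖_b` for all `x` (`ρ(𝒜)` computed w.r.t. the reference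
norm `N`; its value does not depend on this choice). -/
def IsBarabanov (N Nb : (Fin d → K) → ℝ) (𝒜 : Set (Matrix (Fin d) (Fin d) K)) : Prop :=
  IsNorm Nb ∧ ∀ x : Fin d → K,
    jsr N 𝒜 * Nb x = sSup {r : ℝ | ∃ A ∈ 𝒜, r = Nb (A.mulVec x)}

/-- The eccentricity `ecc(N', N'') = (max_{x ≠ 0} N' x / N'' x) / (min_{x ≠ 0} N' x / N'' x)`. -/
noncomputable def eccen (N' N'' : (Fin d → K) → ℝ) : ℝ :=
  sSup {r : ℝ | ∃ x : Fin d → K, x ≠ 0 ∧ r = N' x / N'' x} /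
    sInf {r : ℝ | ∃ x : Fin d → K, x ≠ 0 ∧ r = N' x / N'' x}

end Defs


/-!
`⇐`: if `‖·‖_b` is a Barabanov norm then `max_{M ∈ 𝒜ⁿ} ‖M x‖_b = ρⁿ ‖x‖_b`, so by equivalence of
norms `‖𝒜ⁿ‖` lies between two constant multiples of `ρⁿ` and `‖𝒜ⁿ‖^{1/n} → ρ`.

`⇒` (when `𝒜 ≠ {0}`; otherwise `N` itself works): irreducibility makes `x ↦ max_{A ∈ 𝒜} ‖A x‖`
a norm, so `‖𝒜ⁿ‖ ≥ cⁿ` and Fekete's lemma gives `ρ = ρ(𝒜) > 0` with `‖𝒜ⁿ‖ ≥ ρⁿ`. The vectors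
whose orbits are `O(ρⁿ)` form an invariant subspace. If it were `{0}`, a finite subcover of the
unit sphere would stretch every vector by `2ρⁿ` within `L` steps, hence by `2ʲρⁿ` within `jL`
steps, against `‖𝒜ⁿ‖ = O((ρs)ⁿ)` for `sᴸ < 2`; so `‖𝒜ⁿ‖ ≤ Cρⁿ`. Then
`‖x‖_b = limsup ρ⁻ⁿ max_{M ∈ 𝒜ⁿ} ‖M x‖` is the decreasing limit of the seminorms
`sup_{m ≥ n} ρ⁻ᵐ max_{M ∈ 𝒜ᵐ} ‖M x‖`, and Cantor's intersection theorem (on `𝒜`, resp. on the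
unit sphere) exchanges this limit with a maximum: this gives the Barabanov identity, resp. a
vector with `‖x‖_b ≥ 1`. The kernel of `‖·‖_b` is then a proper invariant subspace, so it is `0`.
-/

end JSRPaper

open scoped Topology Pointwise

theorem IsCompact.pow {M : Type*} [Monoid M] [TopologicalSpace M] [ContinuousMul M] {S : Set M}
    (hS : IsCompact S) (n : ℕ) : IsCompact (S ^ n) := by
  induction n with
  | zero => simp
  | succ n ih => rw [pow_succ]; exact ih.mul hS

section Sequences

/-- Fekete's lemma, applied to `log s`. -/
theorem exists_tendsto_rpow_inv_of_submul {s : ℕ → ℝ} {c : ℝ} (hc : 0 < c)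
    (hlow : ∀ n, c ^ n ≤ s n) (hsub : ∀ m n, s (m + n) ≤ s m * s n) :
    ∃ L, 0 < L ∧ (∀ n, L ^ n ≤ s n) ∧
      Tendsto (fun n : ℕ => s n ^ ((n : ℝ)⁻¹)) atTop (𝓝 L) := by
  have hpos n : 0 < s n := (pow_pos hc n).trans_le (hlow n)
  have hlog : Subadditive fun n => Real.log (s n) := fun m n => by
    rw [← Real.log_mul (hpos m).ne' (hpos n).ne']
    exact Real.log_le_log (hpos _) (hsub m n)
  have hbdd : BddBelow (range fun n : ℕ => Real.log (s n) / n) := by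
    refine ⟨min (Real.log c) 0, ?_⟩
    rintro _ ⟨n, rfl⟩
    rcases n.eq_zero_or_pos with rfl | hn
    · simp
    · refine (min_le_left _ _).trans ?_
      rw [le_div_iff₀ (by exact_mod_cast hn), mul_comm, ← Real.log_pow]
      exact Real.log_le_log (pow_pos hc n) (hlow n)
  refine ⟨Real.exp hlog.lim, Real.exp_pos _, fun n => ?_, ?_⟩
  · rcases eq_or_ne n 0 with rfl | hn
    · simpa using hlow 0
    have hlim : n * hlog.lim ≤ Real.log (s n) := by
      have := hlog.lim_le_div hbdd hn
      rwa [le_div_iff₀' (by positivity)] at this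
    calc Real.exp hlog.lim ^ n = Real.exp (n * hlog.lim) := (Real.exp_nat_mul _ _).symm
      _ ≤ Real.exp (Real.log (s n)) := Real.exp_le_exp.2 hlim
      _ = s n := Real.exp_log (hpos n)
  · refine ((Real.continuous_exp.tendsto _).comp (hlog.tendsto_lim hbdd)).congr' ?_
    filter_upwards [eventually_ne_atTop 0] with n hn
    rw [Function.comp_apply, Real.rpow_def_of_pos (hpos n), div_eq_mul_inv]

theorem exists_le_mul_pow_of_tendsto {s : ℕ → ℝ} {L r : ℝ} (hs : ∀ n, 0 ≤ s n)
    (h : Tendsto (fun n : ℕ => s n ^ ((n : ℝ)⁻¹)) atTop (𝓝 L)) (hr : L < r) :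
    ∃ C, ∀ n, s n ≤ C * r ^ n := by
  have hr0 : 0 < r := (ge_of_tendsto' h fun n => Real.rpow_nonneg (hs n) _).trans_lt hr
  have hev : ∀ᶠ n in atTop, ‖s n‖ ≤ ‖r ^ n‖ := by
    filter_upwards [h.eventually (gt_mem_nhds hr), eventually_ne_atTop 0] with n hn hn0
    rw [Real.norm_of_nonneg (hs n), Real.norm_of_nonneg (pow_nonneg hr0.le n),
      ← Real.rpow_inv_natCast_pow (hs n) hn0]
    exact pow_le_pow_left₀ (Real.rpow_nonneg (hs n) _) hn.le n
  obtain ⟨C, hC⟩ := (Asymptotics.isBigO_nat_atTop_iff fun n hn =>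
    absurd hn (pow_ne_zero n hr0.ne')).1 (Asymptotics.IsBigO.of_bound' hev)
  refine ⟨C, fun n => ?_⟩
  simpa [Real.norm_of_nonneg (hs n), Real.norm_of_nonneg (pow_nonneg hr0.le n)] using hC n

theorem tendsto_rpow_inv_of_le_of_le {s : ℕ → ℝ} {L c C : ℝ} (hL : 0 ≤ L) (hc : 0 < c)
    (hlow : ∀ n, c * L ^ n ≤ s n) (hup : ∀ n, s n ≤ C * L ^ n) :
    Tendsto (fun n : ℕ => s n ^ ((n : ℝ)⁻¹)) atTop (𝓝 L) := by
  have hC : 0 < C := hc.trans_le (by simpa using (hlow 0).trans (hup 0))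
  have hroot {a : ℝ} (ha : 0 < a) :
      Tendsto (fun n : ℕ => (a * L ^ n) ^ ((n : ℝ)⁻¹)) atTop (𝓝 L) := by
    have h1 : Tendsto (fun n : ℕ => a ^ ((n : ℝ)⁻¹) * L) atTop (𝓝 L) := by
      simpa using (((Real.continuous_const_rpow ha.ne').tendsto 0).comp
        (tendsto_inv_atTop_zero.comp tendsto_natCast_atTop_atTop)).mul_const L
    refine h1.congr' ?_
    filter_upwards [eventually_ne_atTop 0] with n hn
    rw [Real.mul_rpow ha.le (pow_nonneg hL n), Real.pow_rpow_inv_natCast hL hn]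
  refine tendsto_of_tendsto_of_tendsto_of_le_of_le (hroot hc) (hroot hC) (fun n => ?_) fun n => ?_
  · exact Real.rpow_le_rpow (by positivity) (hlow n) (by positivity)
  · exact Real.rpow_le_rpow ((by positivity : 0 ≤ c * L ^ n).trans (hlow n)) (hup n)
      (by positivity)

end Sequences

/-- Cantor's intersection theorem for the closed sets `{x ∈ S | c ≤ f n x}`. -/
theorem IsCompact.exists_forall_le_of_antitone {X : Type*} [TopologicalSpace X] [T2Space X]
    {S : Set X} (hS : IsCompact S) {f : ℕ → X → ℝ} (hf : ∀ n, Continuous (f n))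
    (hanti : ∀ n x, f (n + 1) x ≤ f n x) {c : ℝ} (h : ∀ n, ∃ x ∈ S, c ≤ f n x) :
    ∃ x ∈ S, ∀ n, c ≤ f n x := by
  obtain ⟨x, hx⟩ := IsCompact.nonempty_iInter_of_sequence_nonempty_isCompact_isClosed
    (fun n => S ∩ {x | c ≤ f n x}) (fun n x hx => ⟨hx.1, hx.2.trans (hanti n x)⟩) h
    (hS.inter_right (isClosed_le continuous_const (hf 0)))
    fun n => hS.isClosed.inter (isClosed_le continuous_const (hf n))
  simp only [Set.mem_iInter, Set.mem_inter_iff, Set.mem_ofPred_eq] at hx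
  exact ⟨x, (hx 0).1, fun n => (hx n).2⟩

namespace JSRPaper

open scoped Matrix

section

variable {d : ℕ} {K : Type*} [RCLike K]

section Seminorms

/-- Unbundled like `IsNorm`, so that it applies directly to the real functions built below. -/
structure IsSeminorm (p : (Fin d → K) → ℝ) : Prop where
  smul : ∀ (c : K) x, p (c • x) = ‖c‖ * p x
  add_le : ∀ x y, p (x + y) ≤ p x + p y

variable {p N : (Fin d → K) → ℝ}

theorem IsNorm.isSeminorm (hN : IsNorm N) : IsSeminorm N := ⟨hN.2.2.1, hN.2.2.2⟩

theorem IsNorm.nonneg (hN : IsNorm N) (x : Fin d → K) : 0 ≤ N x := hN.1 x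

theorem IsNorm.pos (hN : IsNorm N) {x : Fin d → K} (hx : x ≠ 0) : 0 < N x :=
  (hN.nonneg x).lt_of_ne fun h => hx ((hN.2.1 x).1 h.symm)

theorem isNorm_norm : IsNorm fun x : Fin d → K => ‖x‖ :=
  ⟨norm_nonneg, fun _ => norm_eq_zero, norm_smul, norm_add_le⟩

namespace IsSeminorm

theorem map_zero (hp : IsSeminorm p) : p 0 = 0 := by
  simpa using hp.smul 0 0

theorem nonneg (hp : IsSeminorm p) (x : Fin d → K) : 0 ≤ p x := by
  have h := hp.add_le x ((-1 : K) • x)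
  rw [hp.smul, neg_smul, one_smul, add_neg_cancel, hp.map_zero] at h
  simp only [norm_neg, norm_one, one_mul] at h
  linarith

theorem le_add_sub (hp : IsSeminorm p) (x y : Fin d → K) : p x ≤ p y + p (x - y) := by
  simpa using hp.add_le y (x - y)

theorem comp_mulVec (hp : IsSeminorm p) (A : Matrix (Fin d) (Fin d) K) :
    IsSeminorm fun x => p (A *ᵥ x) :=
  ⟨fun c x => by rw [Matrix.mulVec_smul, hp.smul], fun x y => by
    rw [Matrix.mulVec_add]; exact hp.add_le _ _⟩

theorem le_sum_mul_norm (hp : IsSeminorm p) (x : Fin d → K) :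
    p x ≤ (∑ i, p (Pi.single i 1)) * ‖x‖ := by
  calc p x = p (∑ i, x i • Pi.single i 1) := by
        simpa using congrArg p ((Pi.basisFun K (Fin d)).sum_repr x).symm
    _ ≤ ∑ i, p (x i • Pi.single i 1) := Finset.le_sum_of_subadditive p hp.map_zero.le hp.add_le _ _
    _ = ∑ i, ‖x i‖ * p (Pi.single i 1) := by simp only [hp.smul]
    _ ≤ ∑ i, ‖x‖ * p (Pi.single i 1) := by
        gcongr with i
        exacts [hp.nonneg _, norm_le_pi_norm x i]
    _ = (∑ i, p (Pi.single i 1)) * ‖x‖ := by rw [← Finset.mul_sum, mul_comm]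

theorem continuous (hp : IsSeminorm p) : Continuous p := by
  refine (LipschitzWith.of_le_add_mul' (∑ i, p (Pi.single i 1)) fun x y => ?_).continuous
  rw [dist_eq_norm]
  exact (hp.le_add_sub x y).trans (add_le_add le_rfl (hp.le_sum_mul_norm _))

theorem isNorm (hp : IsSeminorm p) (hdef : ∀ x, p x = 0 → x = 0) : IsNorm p :=
  ⟨hp.nonneg, fun x => ⟨hdef x, fun hx => hx ▸ hp.map_zero⟩, hp.smul, hp.add_le⟩

end IsSeminorm

namespace IsNorm

theorem continuous (hN : IsNorm N) : Continuous N := hN.isSeminorm.continuous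

theorem apply_smul_inv_apply (hN : IsNorm N) {x : Fin d → K} (hx : x ≠ 0) :
    N ((((N x)⁻¹ : ℝ) : K) • x) = 1 := by
  rw [hN.isSeminorm.smul, RCLike.norm_ofReal,
    abs_of_pos (inv_pos.2 (hN.pos hx)), inv_mul_cancel₀ (hN.pos hx).ne']

theorem exists_eq_one (hN : IsNorm N) (hd : 1 ≤ d) : ∃ x : Fin d → K, N x = 1 :=
  ⟨_, hN.apply_smul_inv_apply (x := Pi.single ⟨0, hd⟩ 1) (by simp)⟩

theorem le_mul_of_forall_eq_one (hN : IsNorm N) {f : (Fin d → K) → ℝ}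
    (hf : ∀ (c : K) x, f (c • x) = ‖c‖ * f x) {C : ℝ} (h : ∀ x, N x = 1 → f x ≤ C)
    (x : Fin d → K) : f x ≤ C * N x := by
  rcases eq_or_ne x 0 with rfl | hx
  · simpa [hN.isSeminorm.map_zero] using (hf 0 0).le
  · calc f x = f (((N x : ℝ) : K) • (((N x)⁻¹ : ℝ) : K) • x) := by
          rw [smul_smul, ← RCLike.ofReal_mul, mul_inv_cancel₀ (hN.pos hx).ne',
            RCLike.ofReal_one, one_smul]
      _ = N x * f ((((N x)⁻¹ : ℝ) : K) • x) := by
          rw [hf, RCLike.norm_ofReal, abs_of_nonneg (hN.nonneg x)]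
      _ ≤ N x * C := mul_le_mul_of_nonneg_left (h _ (hN.apply_smul_inv_apply hx)) (hN.nonneg x)
      _ = C * N x := mul_comm _ _

theorem mul_le_of_forall_eq_one (hN : IsNorm N) {f : (Fin d → K) → ℝ}
    (hf : ∀ (c : K) x, f (c • x) = ‖c‖ * f x) {c : ℝ} (h : ∀ x, N x = 1 → c ≤ f x)
    (x : Fin d → K) : c * N x ≤ f x := by
  have := hN.le_mul_of_forall_eq_one (f := fun x => -f x) (fun a y => by simp [hf])
    (C := -c) (fun y hy => neg_le_neg (h y hy)) x
  linarith

theorem exists_pos_mul_le (hN : IsNorm N) (hS : IsCompact {x | N x = 1})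
    {f : (Fin d → K) → ℝ} (hfc : Continuous f) (hf : ∀ (c : K) x, f (c • x) = ‖c‖ * f x)
    (hpos : ∀ x, N x = 1 → 0 < f x) : ∃ c, 0 < c ∧ ∀ x, c * N x ≤ f x := by
  obtain ⟨c, hc, hcf⟩ := hS.exists_forall_le' hfc.continuousOn hpos
  exact ⟨c, hc, hN.mul_le_of_forall_eq_one hf hcf⟩

theorem exists_pos_mul_norm_le (hN : IsNorm N) : ∃ c, 0 < c ∧ ∀ x, c * ‖x‖ ≤ N x := by
  have hsph : IsCompact {x : Fin d → K | ‖x‖ = 1} := by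
    simpa [Metric.sphere, dist_eq_norm] using _root_.isCompact_sphere (0 : Fin d → K) 1
  exact isNorm_norm.exists_pos_mul_le hsph hN.continuous hN.isSeminorm.smul
    fun x hx => hN.pos (by rintro rfl; simp at hx)

theorem isCompact_sphere (hN : IsNorm N) : IsCompact {x : Fin d → K | N x = 1} := by
  obtain ⟨c, hc, hcN⟩ := hN.exists_pos_mul_norm_le
  refine Metric.isCompact_of_isClosed_isBounded (isClosed_eq hN.continuous continuous_const)
    ((Metric.isBounded_closedBall (x := 0) (r := c⁻¹)).subset fun x hx => ?_)
  rw [Metric.mem_closedBall, dist_zero_right, ← one_div, le_div_iff₀' hc]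
  exact (hcN x).trans_eq hx

end IsNorm

end Seminorms

section Matrices

variable {p q N : (Fin d → K) → ℝ} {S T 𝒜 : Set (Matrix (Fin d) (Fin d) K)}

theorem IsNorm.exists_mulVec_le (hN : IsNorm N) (hS : IsCompact S) :
    ∃ C, ∀ A ∈ S, ∀ x, N (A *ᵥ x) ≤ C * N x := by
  have hcont : Continuous fun q : Matrix (Fin d) (Fin d) K × (Fin d → K) => N (q.1 *ᵥ q.2) :=
    hN.continuous.comp (continuous_fst.matrix_mulVec continuous_snd)
  obtain ⟨C, hC⟩ := ((hS.prod hN.isCompact_sphere).image hcont).bddAbove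
  exact ⟨C, fun A hA => hN.le_mul_of_forall_eq_one (f := fun x => N (A *ᵥ x))
    (hN.isSeminorm.comp_mulVec A).smul
    fun x hx => hC ⟨(A, x), ⟨hA, hx⟩, rfl⟩⟩

theorem prodSet_eq_pow (𝒜 : Set (Matrix (Fin d) (Fin d) K)) (n : ℕ) : prodSet 𝒜 n = 𝒜 ^ n := by
  induction n with
  | zero => simp [prodSet, Set.singleton_one]
  | succ n ih =>
    ext M
    simp only [prodSet, ih, pow_succ', Set.mem_mul, Set.mem_ofPred_eq, eq_comm]

theorem jsr_eq_limsup (N : (Fin d → K) → ℝ) (𝒜 : Set (Matrix (Fin d) (Fin d) K)) :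
    jsr N 𝒜 = limsup (fun n : ℕ => setNorm N (𝒜 ^ n) ^ ((n : ℝ)⁻¹)) atTop := by
  simp only [jsr, prodSet_eq_pow]

/-- `sup_{A ∈ S} p (A x)`, with the set written exactly as in the statement of the theorem. -/
noncomputable def setNormAt (p : (Fin d → K) → ℝ) (S : Set (Matrix (Fin d) (Fin d) K))
    (x : Fin d → K) : ℝ :=
  sSup {r : ℝ | ∃ A ∈ S, r = p (A *ᵥ x)}

theorem bddAbove_setNormAt (hp : Continuous p) (hS : IsCompact S) (x : Fin d → K) :
    BddAbove {r : ℝ | ∃ A ∈ S, r = p (A *ᵥ x)} := by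
  obtain ⟨C, hC⟩ := (hS.image (hp.comp (continuous_id.matrix_mulVec continuous_const))).bddAbove
  exact ⟨C, by rintro _ ⟨A, hA, rfl⟩; exact hC ⟨A, hA, rfl⟩⟩

theorem le_setNormAt (hp : Continuous p) (hS : IsCompact S) {A : Matrix (Fin d) (Fin d) K}
    (hA : A ∈ S) (x : Fin d → K) : p (A *ᵥ x) ≤ setNormAt p S x :=
  le_csSup (bddAbove_setNormAt hp hS x) ⟨A, hA, rfl⟩

theorem setNormAt_le (hne : S.Nonempty) {x : Fin d → K} {b : ℝ}
    (h : ∀ A ∈ S, p (A *ᵥ x) ≤ b) : setNormAt p S x ≤ b :=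
  csSup_le (hne.elim fun A hA => ⟨_, A, hA, rfl⟩) (by rintro _ ⟨A, hA, rfl⟩; exact h A hA)

theorem setNormAt_mono (hq : Continuous q) (hS : IsCompact S) (hne : S.Nonempty)
    (h : ∀ x, p x ≤ q x) (x : Fin d → K) : setNormAt p S x ≤ setNormAt q S x :=
  setNormAt_le hne fun _ hA => (h _).trans (le_setNormAt hq hS hA x)

theorem setNormAt_congr_mul {c : ℝ} (hc : 0 ≤ c) {x y : Fin d → K}
    (h : ∀ A ∈ S, q (A *ᵥ y) = c * p (A *ᵥ x)) : setNormAt q S y = c * setNormAt p S x := by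
  rw [setNormAt, setNormAt, ← smul_eq_mul, ← Real.sSup_smul_of_nonneg hc]
  congr 1
  ext r
  simp only [Set.mem_smul_set, Set.mem_ofPred_eq, smul_eq_mul]
  constructor
  · rintro ⟨A, hA, rfl⟩; exact ⟨_, ⟨A, hA, rfl⟩, (h A hA).symm⟩
  · rintro ⟨_, ⟨A, hA, rfl⟩, rfl⟩; exact ⟨A, hA, (h A hA).symm⟩

theorem setNormAt_const_mul {c : ℝ} (hc : 0 ≤ c) (x : Fin d → K) :
    setNormAt (fun y => c * p y) S x = c * setNormAt p S x :=
  setNormAt_congr_mul hc fun _ _ => rfl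

theorem setNormAt_one (x : Fin d → K) : setNormAt p 1 x = p x := by
  simp [setNormAt, Set.mem_one]

theorem IsSeminorm.setNormAt (hp : IsSeminorm p) (hS : IsCompact S) (hne : S.Nonempty) :
    IsSeminorm (setNormAt p S) where
  smul c x := setNormAt_congr_mul (norm_nonneg c) fun A _ => by
    rw [Matrix.mulVec_smul, hp.smul]
  add_le x y := setNormAt_le hne fun A hA => by
    rw [Matrix.mulVec_add]
    exact (hp.add_le _ _).trans
      (add_le_add (le_setNormAt hp.continuous hS hA x) (le_setNormAt hp.continuous hS hA y))

theorem setNormAt_mul (hp : IsSeminorm p) (hS : IsCompact S) (hT : IsCompact T)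
    (hSne : S.Nonempty) (hTne : T.Nonempty) (x : Fin d → K) :
    setNormAt p (S * T) x = setNormAt (setNormAt p S) T x := by
  refine le_antisymm (setNormAt_le (hSne.mul hTne) ?_) (setNormAt_le hTne fun B hB => ?_)
  · rintro _ ⟨A, hA, B, hB, rfl⟩
    rw [← Matrix.mulVec_mulVec]
    exact (le_setNormAt hp.continuous hS hA _).trans
      (le_setNormAt (hp.setNormAt hS hSne).continuous hT hB x)
  · refine setNormAt_le hSne fun A hA => ?_
    rw [Matrix.mulVec_mulVec]
    exact le_setNormAt hp.continuous (hS.mul hT) (Set.mul_mem_mul hA hB) x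

namespace IsNorm

theorem mulVec_le_opNorm_mul (hN : IsNorm N) (A : Matrix (Fin d) (Fin d) K) (x : Fin d → K) :
    N (A *ᵥ x) ≤ opNorm N A * N x := by
  obtain ⟨C, hC⟩ := hN.exists_mulVec_le (isCompact_singleton (x := A))
  refine hN.le_mul_of_forall_eq_one (f := fun x => N (A *ᵥ x))
    (hN.isSeminorm.comp_mulVec A).smul (fun y hy => ?_) x
  refine le_csSup ⟨C, ?_⟩ ⟨y, hy, rfl⟩
  rintro _ ⟨z, hz, rfl⟩
  simpa [hz] using hC A rfl z

theorem opNorm_le (hN : IsNorm N) (hd : 1 ≤ d) {A : Matrix (Fin d) (Fin d) K} {b : ℝ}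
    (h : ∀ x, N (A *ᵥ x) ≤ b * N x) : opNorm N A ≤ b := by
  obtain ⟨x, hx⟩ := hN.exists_eq_one hd
  refine csSup_le ⟨_, x, hx, rfl⟩ ?_
  rintro _ ⟨y, hy, rfl⟩
  simpa [hy] using h y

theorem setNorm_nonneg (hN : IsNorm N) : 0 ≤ setNorm N S :=
  Real.sSup_nonneg <| by
    rintro _ ⟨A, -, rfl⟩
    exact Real.sSup_nonneg (by rintro _ ⟨x, -, rfl⟩; exact hN.nonneg _)

theorem mulVec_le_setNorm_mul (hN : IsNorm N) (hd : 1 ≤ d) (hS : IsCompact S)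
    {A : Matrix (Fin d) (Fin d) K} (hA : A ∈ S) (x : Fin d → K) :
    N (A *ᵥ x) ≤ setNorm N S * N x := by
  obtain ⟨C, hC⟩ := hN.exists_mulVec_le hS
  have hbdd : BddAbove (opNorm N '' S) :=
    ⟨C, by rintro _ ⟨B, hB, rfl⟩; exact hN.opNorm_le hd (hC B hB)⟩
  exact (hN.mulVec_le_opNorm_mul A x).trans
    (mul_le_mul_of_nonneg_right (le_csSup hbdd ⟨A, hA, rfl⟩) (hN.nonneg x))

theorem setNorm_le (hN : IsNorm N) (hd : 1 ≤ d) (hne : S.Nonempty) {b : ℝ}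
    (h : ∀ A ∈ S, ∀ x, N (A *ᵥ x) ≤ b * N x) : setNorm N S ≤ b :=
  csSup_le (hne.image _) (by rintro _ ⟨A, hA, rfl⟩; exact hN.opNorm_le hd (h A hA))

theorem setNormAt_le_setNorm_mul (hN : IsNorm N) (hd : 1 ≤ d) (hS : IsCompact S)
    (hne : S.Nonempty) (x : Fin d → K) : setNormAt N S x ≤ setNorm N S * N x :=
  setNormAt_le hne fun _ hA => hN.mulVec_le_setNorm_mul hd hS hA x

theorem setNorm_mul_le (hN : IsNorm N) (hd : 1 ≤ d) (hS : IsCompact S) (hT : IsCompact T)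
    (hSne : S.Nonempty) (hTne : T.Nonempty) : setNorm N (S * T) ≤ setNorm N S * setNorm N T := by
  refine hN.setNorm_le hd (hSne.mul hTne) ?_
  rintro _ ⟨A, hA, B, hB, rfl⟩ x
  rw [← Matrix.mulVec_mulVec, mul_assoc]
  exact (hN.mulVec_le_setNorm_mul hd hS hA _).trans
    (mul_le_mul_of_nonneg_left (hN.mulVec_le_setNorm_mul hd hT hB x) hN.setNorm_nonneg)

end IsNorm

end Matrices

section Irreducible

variable {p N : (Fin d → K) → ℝ} {𝒜 : Set (Matrix (Fin d) (Fin d) K)}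

theorem IsIrred.isNorm_of_isSeminorm (hir : IsIrred 𝒜) (hp : IsSeminorm p)
    (hinv : ∀ A ∈ 𝒜, ∀ x, p x = 0 → p (A *ᵥ x) = 0) (hne : ∃ x, p x ≠ 0) : IsNorm p := by
  let W : Submodule K (Fin d → K) :=
    { carrier := {x | p x = 0}
      add_mem' := fun {x y} hx hy => le_antisymm ((hp.add_le x y).trans_eq (by
          rw [Set.mem_ofPred_eq] at hx hy; rw [hx, hy, add_zero])) (hp.nonneg _)
      zero_mem' := hp.map_zero
      smul_mem' := fun c x hx => by
        rw [Set.mem_ofPred_eq] at hx ⊢; rw [hp.smul, hx, mul_zero] }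
  rcases hir W hinv with hW | hW
  · exact hp.isNorm fun x hx => (Submodule.mem_bot K).1 (hW ▸ (hx : x ∈ W))
  · obtain ⟨x, hx⟩ := hne
    exact absurd (hW ▸ Submodule.mem_top : x ∈ W) hx

theorem IsIrred.isNorm_setNormAt (hir : IsIrred 𝒜) (hN : IsNorm N) (hcp : IsCompact 𝒜)
    (hne : 𝒜.Nonempty) (h0 : ∃ A ∈ 𝒜, A ≠ 0) : IsNorm (setNormAt N 𝒜) := by
  have hp := hN.isSeminorm.setNormAt hcp hne
  have hker : ∀ x, setNormAt N 𝒜 x = 0 → ∀ A ∈ 𝒜, A *ᵥ x = 0 := fun x hx A hA =>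
    (hN.2.1 _).1 (le_antisymm ((le_setNormAt hN.continuous hcp hA x).trans_eq hx) (hN.nonneg _))
  refine hir.isNorm_of_isSeminorm hp (fun A hA x hx => by rw [hker x hx A hA, hp.map_zero]) ?_
  obtain ⟨A, hA, hA0⟩ := h0
  obtain ⟨x, hx⟩ : ∃ x, A *ᵥ x ≠ 0 := by
    by_contra! h
    exact hA0 (Matrix.ext_iff_mulVec.2 fun x => by simp [h x])
  exact ⟨x, fun h => hx (hker x h A hA)⟩

theorem IsIrred.exists_pos_pow_le_setNorm (hir : IsIrred 𝒜) (hN : IsNorm N) (hd : 1 ≤ d)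
    (hcp : IsCompact 𝒜) (hne : 𝒜.Nonempty) (h0 : ∃ A ∈ 𝒜, A ≠ 0) :
    ∃ c, 0 < c ∧ ∀ n, c ^ n ≤ setNorm N (𝒜 ^ n) := by
  have hF := hir.isNorm_setNormAt hN hcp hne h0
  obtain ⟨c, hc, hcF⟩ := hN.exists_pos_mul_le hN.isCompact_sphere hF.continuous
    hF.isSeminorm.smul fun x hx => hF.pos (by rintro rfl; simp [hN.isSeminorm.map_zero] at hx)
  have hpow : ∀ n x, c ^ n * N x ≤ setNormAt N (𝒜 ^ n) x := by
    intro n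
    induction n with
    | zero => intro x; simp [setNormAt_one]
    | succ n ih =>
      intro x
      rw [pow_succ' 𝒜, setNormAt_mul hN.isSeminorm hcp (hcp.pow n) hne hne.pow x, pow_succ',
        mul_assoc]
      calc c * (c ^ n * N x) ≤ c * setNormAt N (𝒜 ^ n) x := by gcongr; exact ih x
        _ = setNormAt (fun y => c * N y) (𝒜 ^ n) x := (setNormAt_const_mul hc.le x).symm
        _ ≤ setNormAt (setNormAt N 𝒜) (𝒜 ^ n) x :=
          setNormAt_mono hF.continuous (hcp.pow n) hne.pow hcF x
  obtain ⟨x, hx⟩ := hN.exists_eq_one hd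
  refine ⟨c, hc, fun n => ?_⟩
  simpa [hx] using (hpow n x).trans (hN.setNormAt_le_setNorm_mul hd (hcp.pow n) hne.pow x)

end Irreducible

section ProductBound

variable {N : (Fin d → K) → ℝ} {𝒜 : Set (Matrix (Fin d) (Fin d) K)} {ρ : ℝ}

def boundedOrbits (hN : IsNorm N) (𝒜 : Set (Matrix (Fin d) (Fin d) K)) (ρ : ℝ) :
    Submodule K (Fin d → K) where
  carrier := {x | ∃ B, ∀ n, ∀ M ∈ 𝒜 ^ n, N (M *ᵥ x) ≤ B * ρ ^ n}
  add_mem' := by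
    rintro x y ⟨B, hB⟩ ⟨B', hB'⟩
    refine ⟨B + B', fun n M hM => ?_⟩
    rw [Matrix.mulVec_add, add_mul]
    exact (hN.isSeminorm.add_le _ _).trans (add_le_add (hB n M hM) (hB' n M hM))
  zero_mem' := ⟨0, fun n M _ => by simp [hN.isSeminorm.map_zero]⟩
  smul_mem' := by
    rintro c x ⟨B, hB⟩
    refine ⟨‖c‖ * B, fun n M hM => ?_⟩
    rw [Matrix.mulVec_smul, hN.isSeminorm.smul, mul_assoc]
    exact mul_le_mul_of_nonneg_left (hB n M hM) (norm_nonneg c)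

theorem mulVec_mem_boundedOrbits (hN : IsNorm N) {A : Matrix (Fin d) (Fin d) K} (hA : A ∈ 𝒜)
    {x : Fin d → K} (hx : x ∈ boundedOrbits hN 𝒜 ρ) : A *ᵥ x ∈ boundedOrbits hN 𝒜 ρ := by
  obtain ⟨B, hB⟩ := hx
  refine ⟨B * ρ, fun n M hM => ?_⟩
  rw [Matrix.mulVec_mulVec, mul_assoc, ← pow_succ']
  exact hB (n + 1) _ (pow_succ 𝒜 n ▸ Set.mul_mem_mul hM hA)

theorem exists_mulVec_le_of_boundedOrbits_eq_top (hN : IsNorm N)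
    (htop : boundedOrbits hN 𝒜 ρ = ⊤) :
    ∃ C, ∀ n, ∀ M ∈ 𝒜 ^ n, ∀ x, N (M *ᵥ x) ≤ C * ρ ^ n * N x := by
  have hmem i : Pi.single i 1 ∈ boundedOrbits hN 𝒜 ρ := htop ▸ Submodule.mem_top
  choose B hB using hmem
  obtain ⟨c, hc, hcN⟩ := hN.exists_pos_mul_norm_le
  refine ⟨(∑ i, B i) / c, fun n M hM x => ?_⟩
  have hnorm : ‖x‖ ≤ N x / c := by rw [le_div_iff₀' hc]; exact hcN x
  have hsum : 0 ≤ ∑ i, N (M *ᵥ Pi.single i 1) := Finset.sum_nonneg fun i _ => hN.nonneg _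
  calc N (M *ᵥ x) ≤ (∑ i, N (M *ᵥ Pi.single i 1)) * ‖x‖ :=
        (hN.isSeminorm.comp_mulVec M).le_sum_mul_norm x
    _ ≤ (∑ i, N (M *ᵥ Pi.single i 1)) * (N x / c) := mul_le_mul_of_nonneg_left hnorm hsum
    _ ≤ (∑ i, B i * ρ ^ n) * (N x / c) := by
        gcongr with i
        · exact div_nonneg (hN.nonneg x) hc.le
        · exact hB i n M hM
    _ = (∑ i, B i) / c * ρ ^ n * N x := by rw [← Finset.sum_mul]; ring

theorem IsNorm.exists_uniform_expansion (hN : IsNorm N)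
    (h : ∀ x, N x = 1 → ∃ n, ∃ M ∈ 𝒜 ^ n, 2 * ρ ^ n < N (M *ᵥ x)) :
    ∃ L, ∀ x, ∃ n ≤ L, ∃ M ∈ 𝒜 ^ n, 2 * ρ ^ n * N x ≤ N (M *ᵥ x) := by
  let U : (Σ n, ↥(𝒜 ^ n)) → Set (Fin d → K) := fun i => {x | 2 * ρ ^ i.1 < N (i.2.1 *ᵥ x)}
  have hU i : IsOpen (U i) :=
    isOpen_lt continuous_const (hN.continuous.comp (continuous_const.matrix_mulVec continuous_id))
  obtain ⟨t, ht⟩ := hN.isCompact_sphere.elim_finite_subcover U hU fun x hx =>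
    let ⟨n, M, hM, hMx⟩ := h x hx
    Set.mem_iUnion.2 ⟨⟨n, M, hM⟩, hMx⟩
  refine ⟨t.sup fun i => i.1, fun x => ?_⟩
  rcases eq_or_ne x 0 with rfl | hx
  · exact ⟨0, Nat.zero_le _, 1, by simp, by simp [hN.isSeminorm.map_zero]⟩
  obtain ⟨i, hit, hi⟩ := Set.mem_iUnion₂.1 (ht (hN.apply_smul_inv_apply hx))
  refine ⟨i.1, Finset.le_sup (f := fun i => i.1) hit, i.2.1, i.2.2, ?_⟩
  have hi' : 2 * ρ ^ i.1 < (N x)⁻¹ * N (i.2.1 *ᵥ x) := by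
    simp only [U, Set.mem_ofPred_eq, Matrix.mulVec_smul, hN.isSeminorm.smul, RCLike.norm_ofReal,
      abs_of_pos (inv_pos.2 (hN.pos hx))] at hi
    exact hi
  rw [lt_inv_mul_iff₀ (hN.pos hx)] at hi'
  linarith

theorem exists_pow_expansion (hρ : 0 ≤ ρ) {L : ℕ}
    (hL : ∀ x, ∃ n ≤ L, ∃ M ∈ 𝒜 ^ n, 2 * ρ ^ n * N x ≤ N (M *ᵥ x)) (j : ℕ) (x : Fin d → K) :
    ∃ n ≤ j * L, ∃ M ∈ 𝒜 ^ n, 2 ^ j * ρ ^ n * N x ≤ N (M *ᵥ x) := by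
  induction j generalizing x with
  | zero => exact ⟨0, by simp, 1, by simp, by simp⟩
  | succ j ih =>
    obtain ⟨n, hn, M, hM, hMx⟩ := hL x
    obtain ⟨n', hn', M', hM', hM'x⟩ := ih (M *ᵥ x)
    refine ⟨n' + n, by rw [Nat.succ_mul]; exact Nat.add_le_add hn' hn, M' * M,
      pow_add 𝒜 n' n ▸ Set.mul_mem_mul hM' hM, ?_⟩
    rw [← Matrix.mulVec_mulVec]
    calc 2 ^ (j + 1) * ρ ^ (n' + n) * N x = 2 ^ j * ρ ^ n' * (2 * ρ ^ n * N x) := by ring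
      _ ≤ 2 ^ j * ρ ^ n' * N (M *ᵥ x) := by gcongr
      _ ≤ N (M' *ᵥ (M *ᵥ x)) := hM'x

theorem boundedOrbits_ne_bot (hN : IsNorm N) (hd : 1 ≤ d) (hcp : IsCompact 𝒜) (hρ : 0 < ρ)
    (hup : ∀ r, ρ < r → ∃ C, ∀ n, setNorm N (𝒜 ^ n) ≤ C * r ^ n) :
    boundedOrbits hN 𝒜 ρ ≠ ⊥ := by
  intro hbot
  have hesc : ∀ x, N x = 1 → ∃ n, ∃ M ∈ 𝒜 ^ n, 2 * ρ ^ n < N (M *ᵥ x) := by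
    intro x hx
    by_contra! hcon
    have hx0 : x ∈ boundedOrbits hN 𝒜 ρ := ⟨2, hcon⟩
    rw [hbot, Submodule.mem_bot] at hx0
    simp [hx0, hN.isSeminorm.map_zero] at hx
  obtain ⟨L, hL⟩ := hN.exists_uniform_expansion hesc
  have hnear : ∀ᶠ s in 𝓝[>] (1 : ℝ), s ^ L < 2 := nhdsWithin_le_nhds
    (((continuous_pow L).tendsto 1).eventually (gt_mem_nhds (by norm_num : (1 : ℝ) ^ L < 2)))
  obtain ⟨s, hsL, hs1⟩ := (hnear.and self_mem_nhdsWithin).exists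
  obtain ⟨C, hC⟩ := hup (ρ * s) (lt_mul_of_one_lt_right hρ hs1)
  obtain ⟨j, hj⟩ := pow_unbounded_of_one_lt C ((one_lt_div (by positivity)).2 hsL)
  obtain ⟨x, hx⟩ := hN.exists_eq_one hd
  obtain ⟨n, hn, M, hM, hMx⟩ := exists_pow_expansion hρ.le hL j x
  have hgrowth : 2 ^ j * ρ ^ n ≤ C * s ^ n * ρ ^ n :=
    calc 2 ^ j * ρ ^ n = 2 ^ j * ρ ^ n * N x := by rw [hx, mul_one]
      _ ≤ N (M *ᵥ x) := hMx
      _ ≤ setNorm N (𝒜 ^ n) * N x := hN.mulVec_le_setNorm_mul hd (hcp.pow n) hM x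
      _ ≤ C * (ρ * s) ^ n := by rw [hx, mul_one]; exact hC n
      _ = C * s ^ n * ρ ^ n := by ring
  have h2j : 2 ^ j ≤ C * s ^ n := le_of_mul_le_mul_right hgrowth (pow_pos hρ n)
  have hC0 : 0 ≤ C := nonneg_of_mul_nonneg_left ((by positivity : (0 : ℝ) ≤ 2 ^ j).trans h2j)
    (by positivity)
  have hsn : s ^ n ≤ (s ^ L) ^ j := by
    rw [← pow_mul, mul_comm]; exact pow_le_pow_right₀ hs1.le hn
  have hCj : (2 / s ^ L) ^ j ≤ C := by
    rw [div_pow, div_le_iff₀ (by positivity)]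
    exact h2j.trans (mul_le_mul_of_nonneg_left hsn hC0)
  exact hj.not_ge hCj

theorem IsIrred.exists_mulVec_le_mul_pow (hir : IsIrred 𝒜) (hN : IsNorm N) (hd : 1 ≤ d)
    (hcp : IsCompact 𝒜) (hρ : 0 < ρ)
    (hup : ∀ r, ρ < r → ∃ C, ∀ n, setNorm N (𝒜 ^ n) ≤ C * r ^ n) :
    ∃ C, ∀ n, ∀ M ∈ 𝒜 ^ n, ∀ x, N (M *ᵥ x) ≤ C * ρ ^ n * N x :=
  exists_mulVec_le_of_boundedOrbits_eq_top hN <|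
    (hir _ fun _ hA _ hx => mulVec_mem_boundedOrbits hN hA hx).resolve_left
      (boundedOrbits_ne_bot hN hd hcp hρ hup)

end ProductBound

section Construction

variable {N : (Fin d → K) → ℝ} {𝒜 : Set (Matrix (Fin d) (Fin d) K)} {ρ C : ℝ}

structure IsProductBounded (N : (Fin d → K) → ℝ) (𝒜 : Set (Matrix (Fin d) (Fin d) K))
    (ρ C : ℝ) : Prop where
  isNorm : IsNorm N
  isCompact : IsCompact 𝒜
  nonempty : 𝒜.Nonempty
  pos : 0 < ρ
  mulVec_le : ∀ n, ∀ M ∈ 𝒜 ^ n, ∀ x, N (M *ᵥ x) ≤ C * ρ ^ n * N x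

noncomputable def tailSup (N : (Fin d → K) → ℝ) (𝒜 : Set (Matrix (Fin d) (Fin d) K)) (ρ : ℝ)
    (n : ℕ) (x : Fin d → K) : ℝ :=
  ⨆ m, ρ⁻¹ ^ (n + m) * setNormAt N (𝒜 ^ (n + m)) x

/-- `limsup_n ρ⁻ⁿ sup_{M ∈ 𝒜ⁿ} N (M x)`. -/
noncomputable def barabanovNorm (N : (Fin d → K) → ℝ) (𝒜 : Set (Matrix (Fin d) (Fin d) K))
    (ρ : ℝ) (x : Fin d → K) : ℝ :=
  ⨅ n, tailSup N 𝒜 ρ n x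

namespace IsProductBounded

theorem isSeminorm_setNormAt_pow (h : IsProductBounded N 𝒜 ρ C) (n : ℕ) :
    IsSeminorm (setNormAt N (𝒜 ^ n)) :=
  h.isNorm.isSeminorm.setNormAt (h.isCompact.pow n) h.nonempty.pow

theorem setNormAt_pow_succ (h : IsProductBounded N 𝒜 ρ C) (n : ℕ) (x : Fin d → K) :
    setNormAt N (𝒜 ^ (n + 1)) x = setNormAt (setNormAt N (𝒜 ^ n)) 𝒜 x := by
  rw [pow_succ, setNormAt_mul h.isNorm.isSeminorm (h.isCompact.pow n) h.isCompact h.nonempty.pow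
    h.nonempty]

theorem inv_pow_mul_setNormAt_le (h : IsProductBounded N 𝒜 ρ C) (n : ℕ) (x : Fin d → K) :
    ρ⁻¹ ^ n * setNormAt N (𝒜 ^ n) x ≤ C * N x := by
  have hρn : ρ⁻¹ ^ n * ρ ^ n = 1 := by rw [← mul_pow, inv_mul_cancel₀ h.pos.ne', one_pow]
  calc ρ⁻¹ ^ n * setNormAt N (𝒜 ^ n) x ≤ ρ⁻¹ ^ n * (C * ρ ^ n * N x) :=
        mul_le_mul_of_nonneg_left (setNormAt_le h.nonempty.pow fun M hM => h.mulVec_le n M hM x)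
          (pow_nonneg (inv_nonneg.2 h.pos.le) n)
    _ = C * N x := by rw [mul_comm C, mul_assoc, ← mul_assoc, hρn, one_mul]

theorem mul_inv_pow_succ (h : IsProductBounded N 𝒜 ρ C) (k : ℕ) :
    ρ * ρ⁻¹ ^ (k + 1) = ρ⁻¹ ^ k := by
  rw [pow_succ', ← mul_assoc, mul_inv_cancel₀ h.pos.ne', one_mul]

theorem le_tailSup (h : IsProductBounded N 𝒜 ρ C) (n m : ℕ) (x : Fin d → K) :
    ρ⁻¹ ^ (n + m) * setNormAt N (𝒜 ^ (n + m)) x ≤ tailSup N 𝒜 ρ n x :=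
  le_ciSup (f := fun m => ρ⁻¹ ^ (n + m) * setNormAt N (𝒜 ^ (n + m)) x)
    ⟨C * N x, by rintro _ ⟨k, rfl⟩; exact h.inv_pow_mul_setNormAt_le _ x⟩ m

theorem tailSup_succ_le (h : IsProductBounded N 𝒜 ρ C) (n : ℕ) (x : Fin d → K) :
    tailSup N 𝒜 ρ (n + 1) x ≤ tailSup N 𝒜 ρ n x :=
  ciSup_le fun m => by rw [Nat.add_right_comm n 1 m]; exact h.le_tailSup n (m + 1) x

theorem isSeminorm_tailSup (h : IsProductBounded N 𝒜 ρ C) (n : ℕ) :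
    IsSeminorm (tailSup N 𝒜 ρ n) where
  smul c x := by
    simp only [tailSup, (h.isSeminorm_setNormAt_pow _).smul,
      Real.mul_iSup_of_nonneg (norm_nonneg c), mul_left_comm]
  add_le x y := ciSup_le fun m =>
    calc ρ⁻¹ ^ (n + m) * setNormAt N (𝒜 ^ (n + m)) (x + y)
        ≤ ρ⁻¹ ^ (n + m) * (setNormAt N (𝒜 ^ (n + m)) x + setNormAt N (𝒜 ^ (n + m)) y) :=
          mul_le_mul_of_nonneg_left ((h.isSeminorm_setNormAt_pow _).add_le x y)
            (pow_nonneg (inv_nonneg.2 h.pos.le) _)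
      _ ≤ tailSup N 𝒜 ρ n x + tailSup N 𝒜 ρ n y := by
          rw [mul_add]; exact add_le_add (h.le_tailSup n m x) (h.le_tailSup n m y)

theorem tailSup_mulVec_le (h : IsProductBounded N 𝒜 ρ C) {A : Matrix (Fin d) (Fin d) K}
    (hA : A ∈ 𝒜) (n : ℕ) (x : Fin d → K) :
    tailSup N 𝒜 ρ n (A *ᵥ x) ≤ ρ * tailSup N 𝒜 ρ (n + 1) x := by
  refine ciSup_le fun m => ?_
  have hstep : setNormAt N (𝒜 ^ (n + m)) (A *ᵥ x) ≤ setNormAt N (𝒜 ^ (n + m + 1)) x := by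
    rw [h.setNormAt_pow_succ]
    exact le_setNormAt (h.isSeminorm_setNormAt_pow _).continuous h.isCompact hA x
  calc ρ⁻¹ ^ (n + m) * setNormAt N (𝒜 ^ (n + m)) (A *ᵥ x)
      ≤ ρ⁻¹ ^ (n + m) * setNormAt N (𝒜 ^ (n + m + 1)) x :=
        mul_le_mul_of_nonneg_left hstep (pow_nonneg (inv_nonneg.2 h.pos.le) _)
    _ = ρ * (ρ⁻¹ ^ (n + 1 + m) * setNormAt N (𝒜 ^ (n + 1 + m)) x) := by
        rw [Nat.add_right_comm n 1 m, ← mul_assoc, h.mul_inv_pow_succ]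
    _ ≤ ρ * tailSup N 𝒜 ρ (n + 1) x :=
        mul_le_mul_of_nonneg_left (h.le_tailSup (n + 1) m x) h.pos.le

theorem mul_tailSup_succ_le (h : IsProductBounded N 𝒜 ρ C) (n : ℕ) (x : Fin d → K) :
    ρ * tailSup N 𝒜 ρ (n + 1) x ≤ setNormAt (tailSup N 𝒜 ρ n) 𝒜 x := by
  rw [tailSup, Real.mul_iSup_of_nonneg h.pos.le]
  refine ciSup_le fun m => ?_
  calc ρ * (ρ⁻¹ ^ (n + 1 + m) * setNormAt N (𝒜 ^ (n + 1 + m)) x)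
      = ρ⁻¹ ^ (n + m) * setNormAt (setNormAt N (𝒜 ^ (n + m))) 𝒜 x := by
        rw [Nat.add_right_comm n 1 m, ← mul_assoc, h.mul_inv_pow_succ, h.setNormAt_pow_succ]
    _ = setNormAt (fun y => ρ⁻¹ ^ (n + m) * setNormAt N (𝒜 ^ (n + m)) y) 𝒜 x :=
        (setNormAt_const_mul (pow_nonneg (inv_nonneg.2 h.pos.le) _) x).symm
    _ ≤ setNormAt (tailSup N 𝒜 ρ n) 𝒜 x :=
        setNormAt_mono (h.isSeminorm_tailSup n).continuous h.isCompact h.nonempty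
          (h.le_tailSup n m) x

theorem barabanovNorm_le_tailSup (h : IsProductBounded N 𝒜 ρ C) (n : ℕ) (x : Fin d → K) :
    barabanovNorm N 𝒜 ρ x ≤ tailSup N 𝒜 ρ n x :=
  ciInf_le ⟨0, by rintro _ ⟨k, rfl⟩; exact (h.isSeminorm_tailSup k).nonneg x⟩ n

theorem tendsto_tailSup (h : IsProductBounded N 𝒜 ρ C) (x : Fin d → K) :
    Tendsto (fun n => tailSup N 𝒜 ρ n x) atTop (𝓝 (barabanovNorm N 𝒜 ρ x)) :=
  tendsto_atTop_ciInf (antitone_nat_of_succ_le fun n => h.tailSup_succ_le n x)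
    ⟨0, by rintro _ ⟨k, rfl⟩; exact (h.isSeminorm_tailSup k).nonneg x⟩

theorem isSeminorm_barabanovNorm (h : IsProductBounded N 𝒜 ρ C) :
    IsSeminorm (barabanovNorm N 𝒜 ρ) where
  smul c x := by
    simp only [barabanovNorm, (h.isSeminorm_tailSup _).smul,
      Real.mul_iInf_of_nonneg (norm_nonneg c)]
  add_le x y := le_of_tendsto_of_tendsto' (h.tendsto_tailSup (x + y))
    ((h.tendsto_tailSup x).add (h.tendsto_tailSup y)) fun n => (h.isSeminorm_tailSup n).add_le x y

theorem barabanovNorm_mulVec_le (h : IsProductBounded N 𝒜 ρ C) {A : Matrix (Fin d) (Fin d) K}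
    (hA : A ∈ 𝒜) (x : Fin d → K) : barabanovNorm N 𝒜 ρ (A *ᵥ x) ≤ ρ * barabanovNorm N 𝒜 ρ x := by
  unfold barabanovNorm
  rw [Real.mul_iInf_of_nonneg h.pos.le]
  exact le_ciInf fun n => (h.barabanovNorm_le_tailSup n _).trans <|
    (h.tailSup_mulVec_le hA n x).trans (mul_le_mul_of_nonneg_left (h.tailSup_succ_le n x) h.pos.le)

/-- `≤` exchanges `inf_n` with `sup_{A ∈ 𝒜}`, using compactness of `𝒜`. -/
theorem mul_barabanovNorm_eq (h : IsProductBounded N 𝒜 ρ C) (x : Fin d → K) :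
    ρ * barabanovNorm N 𝒜 ρ x = setNormAt (barabanovNorm N 𝒜 ρ) 𝒜 x := by
  refine le_antisymm ?_ (setNormAt_le h.nonempty fun A hA => h.barabanovNorm_mulVec_le hA x)
  have hcont n : Continuous fun A : Matrix (Fin d) (Fin d) K => tailSup N 𝒜 ρ n (A *ᵥ x) :=
    (h.isSeminorm_tailSup n).continuous.comp (continuous_id.matrix_mulVec continuous_const)
  obtain ⟨A, hA, hAx⟩ := h.isCompact.exists_forall_le_of_antitone hcont
    (fun n A => h.tailSup_succ_le n _) fun n => by
      obtain ⟨A, hA, hmax⟩ := h.isCompact.exists_isMaxOn h.nonempty (hcont n).continuousOn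
      refine ⟨A, hA, ?_⟩
      calc ρ * barabanovNorm N 𝒜 ρ x ≤ ρ * tailSup N 𝒜 ρ (n + 1) x :=
            mul_le_mul_of_nonneg_left (h.barabanovNorm_le_tailSup _ x) h.pos.le
        _ ≤ setNormAt (tailSup N 𝒜 ρ n) 𝒜 x := h.mul_tailSup_succ_le n x
        _ ≤ tailSup N 𝒜 ρ n (A *ᵥ x) := setNormAt_le h.nonempty fun B hB => hmax hB
  exact (le_ciInf hAx).trans (le_setNormAt h.isSeminorm_barabanovNorm.continuous h.isCompact hA x)

theorem exists_one_le_barabanovNorm (h : IsProductBounded N 𝒜 ρ C) (hd : 1 ≤ d)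
    (hpow : ∀ n, ρ ^ n ≤ setNorm N (𝒜 ^ n)) : ∃ x, 1 ≤ barabanovNorm N 𝒜 ρ x := by
  obtain ⟨x, -, hx⟩ := h.isNorm.isCompact_sphere.exists_forall_le_of_antitone (c := 1)
    (fun n => (h.isSeminorm_tailSup n).continuous) (fun n => h.tailSup_succ_le n) fun n => by
      obtain ⟨x, hx, hmax⟩ := h.isNorm.isCompact_sphere.exists_isMaxOn
        (h.isNorm.exists_eq_one hd) (h.isSeminorm_setNormAt_pow n).continuous.continuousOn
      have hnorm : setNorm N (𝒜 ^ n) ≤ setNormAt N (𝒜 ^ n) x :=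
        h.isNorm.setNorm_le hd h.nonempty.pow fun M hM =>
          h.isNorm.le_mul_of_forall_eq_one (h.isNorm.isSeminorm.comp_mulVec M).smul fun y hy =>
            (le_setNormAt h.isNorm.continuous (h.isCompact.pow n) hM y).trans (hmax hy)
      refine ⟨x, hx, le_trans ?_ (h.le_tailSup n 0 x)⟩
      rw [add_zero, inv_pow, ← div_eq_inv_mul, one_le_div (pow_pos h.pos n)]
      exact (hpow n).trans hnorm
  exact ⟨x, le_ciInf hx⟩

theorem isNorm_barabanovNorm (h : IsProductBounded N 𝒜 ρ C) (hir : IsIrred 𝒜) (hd : 1 ≤ d)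
    (hpow : ∀ n, ρ ^ n ≤ setNorm N (𝒜 ^ n)) : IsNorm (barabanovNorm N 𝒜 ρ) := by
  have hp := h.isSeminorm_barabanovNorm
  refine hir.isNorm_of_isSeminorm hp (fun A hA x hx => le_antisymm ?_ (hp.nonneg _)) ?_
  · simpa [hx] using h.barabanovNorm_mulVec_le hA x
  · obtain ⟨x, hx⟩ := h.exists_one_le_barabanovNorm hd hpow
    exact ⟨x, by linarith⟩

end IsProductBounded

end Construction

section Barabanov

variable {N Nb : (Fin d → K) → ℝ} {𝒜 : Set (Matrix (Fin d) (Fin d) K)} {ρ : ℝ}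

theorem setNormAt_pow_of_barabanov (hNb : IsNorm Nb) (hcp : IsCompact 𝒜) (hne : 𝒜.Nonempty)
    (hρ : 0 ≤ ρ) (hEq : ∀ x, ρ * Nb x = setNormAt Nb 𝒜 x) (n : ℕ) (x : Fin d → K) :
    setNormAt Nb (𝒜 ^ n) x = ρ ^ n * Nb x := by
  induction n generalizing x with
  | zero => simp [setNormAt_one]
  | succ n ih =>
    rw [pow_succ 𝒜, setNormAt_mul hNb.isSeminorm (hcp.pow n) hcp hne.pow hne, funext ih,
      setNormAt_const_mul (pow_nonneg hρ n), ← hEq, pow_succ, mul_assoc]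

theorem jsr_eq_of_barabanov (hN : IsNorm N) (hd : 1 ≤ d) (hcp : IsCompact 𝒜) (hne : 𝒜.Nonempty)
    (hNb : IsNorm Nb) (hρ : 0 ≤ ρ) (hEq : ∀ x, ρ * Nb x = setNormAt Nb 𝒜 x) : jsr N 𝒜 = ρ := by
  have hpow := setNormAt_pow_of_barabanov hNb hcp hne hρ hEq
  obtain ⟨a, ha, haN⟩ := hN.exists_pos_mul_le hN.isCompact_sphere hNb.continuous
    hNb.isSeminorm.smul fun x hx => hNb.pos (by rintro rfl; simp [hN.isSeminorm.map_zero] at hx)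
  obtain ⟨b, hb, hbNb⟩ := hNb.exists_pos_mul_le hNb.isCompact_sphere hN.continuous
    hN.isSeminorm.smul fun x hx => hN.pos (by rintro rfl; simp [hNb.isSeminorm.map_zero] at hx)
  rw [jsr_eq_limsup]
  refine (tendsto_rpow_inv_of_le_of_le hρ (mul_pos ha hb) (C := (a * b)⁻¹)
    (fun n => ?_) fun n => ?_).limsup_eq
  · obtain ⟨x, hx⟩ := hN.exists_eq_one hd
    have hle : ρ ^ n * Nb x ≤ setNorm N (𝒜 ^ n) / b := by
      rw [← hpow]
      refine setNormAt_le hne.pow fun M hM => ?_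
      rw [le_div_iff₀' hb]
      exact (hbNb _).trans ((hN.mulVec_le_setNorm_mul hd (hcp.pow n) hM x).trans_eq
        (by rw [hx, mul_one]))
    have hax : a ≤ Nb x := by simpa [hx] using haN x
    rw [le_div_iff₀' hb] at hle
    calc a * b * ρ ^ n = b * (ρ ^ n * a) := by ring
      _ ≤ b * (ρ ^ n * Nb x) := by gcongr
      _ ≤ setNorm N (𝒜 ^ n) := hle
  · refine hN.setNorm_le hd hne.pow fun M hM x => ?_
    have h1 : a * N (M *ᵥ x) ≤ ρ ^ n * Nb x :=
      (haN _).trans ((le_setNormAt hNb.continuous (hcp.pow n) hM x).trans_eq (hpow n x))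
    have h2 : b * Nb x ≤ N x := hbNb x
    rw [mul_inv, mul_assoc, mul_assoc, ← div_eq_inv_mul, le_div_iff₀' ha]
    calc a * N (M *ᵥ x) ≤ ρ ^ n * Nb x := h1
      _ ≤ ρ ^ n * (b⁻¹ * N x) := by
          gcongr; rw [← div_eq_inv_mul, le_div_iff₀' hb]; exact h2
      _ = b⁻¹ * (ρ ^ n * N x) := by ring

theorem IsIrred.exists_barabanov_norm (hir : IsIrred 𝒜) (hN : IsNorm N) (hd : 1 ≤ d)
    (hcp : IsCompact 𝒜) (hne : 𝒜.Nonempty) (h0 : ∃ A ∈ 𝒜, A ≠ 0) :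
    ∃ Nb : (Fin d → K) → ℝ, IsNorm Nb ∧ ∀ x, jsr N 𝒜 * Nb x = setNormAt Nb 𝒜 x := by
  obtain ⟨c, hc, hlow⟩ := hir.exists_pos_pow_le_setNorm hN hd hcp hne h0
  obtain ⟨ρ, hρ, hpow, htend⟩ := exists_tendsto_rpow_inv_of_submul hc hlow fun m n => by
    rw [pow_add]; exact hN.setNorm_mul_le hd (hcp.pow m) (hcp.pow n) hne.pow hne.pow
  have hjsr : jsr N 𝒜 = ρ := by rw [jsr_eq_limsup]; exact htend.limsup_eq
  obtain ⟨C, hC⟩ := hir.exists_mulVec_le_mul_pow hN hd hcp hρ fun r hr =>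
    exists_le_mul_pow_of_tendsto (fun n => hN.setNorm_nonneg) htend hr
  have hB : IsProductBounded N 𝒜 ρ C := ⟨hN, hcp, hne, hρ, hC⟩
  exact ⟨_, hB.isNorm_barabanovNorm hir hd hpow, fun x => hjsr ▸ hB.mul_barabanovNorm_eq x⟩

end Barabanov

end

/-- Barabanov's theorem: for an irreducible compact set `𝒜`, a real
`ρ ≥ 0` equals the joint spectral radius `ρ(𝒜)` if and only if there is a norm
`‖·‖_b` on `K^d` with `ρ·‖x‖_b = max_{A ∈ 𝒜} ‖A x‖_b` for all `x`. -/
theorem barabanov_characterization {d : ℕ} (hd : 1 ≤ d) {K : Type*} [RCLike K]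
    (N : (Fin d → K) → ℝ) (hN : IsNorm N)
    (𝒜 : Set (Matrix (Fin d) (Fin d) K))
    (h𝒜ne : 𝒜.Nonempty) (h𝒜cp : IsCompact 𝒜) (h𝒜ir : IsIrred 𝒜)
    (ρ : ℝ) (hρ : 0 ≤ ρ) :
    ρ = jsr N 𝒜 ↔ ∃ Nb : (Fin d → K) → ℝ, IsNorm Nb ∧
      ∀ x : Fin d → K, ρ * Nb x = sSup {r : ℝ | ∃ A ∈ 𝒜, r = Nb (A.mulVec x)} := by
  refine ⟨fun hjsr => ?_, fun ⟨Nb, hNb, hEq⟩ =>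
    (jsr_eq_of_barabanov hN hd h𝒜cp h𝒜ne hNb hρ hEq).symm⟩
  subst hjsr
  by_cases h0 : ∃ A ∈ 𝒜, A ≠ 0
  · exact h𝒜ir.exists_barabanov_norm hN hd h𝒜cp h𝒜ne h0
  · push Not at h0
    have hzero : ∀ x, 0 * N x = setNormAt N 𝒜 x := fun x => by
      rw [setNormAt_congr_mul le_rfl (p := N) (x := x) fun A hA => by
        simp [h0 A hA, hN.isSeminorm.map_zero], zero_mul, zero_mul]
    refine ⟨N, hN, ?_⟩
    rwa [jsr_eq_of_barabanov hN hd h𝒜cp h𝒜ne hN le_rfl hzero]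

end JSRPaper
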